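/- The says introduction rule is sound: if every model-world-valuation satisfying all of Γ satisfies φ, then every model-world-valuation satisfying all of (p says Γ) satisfies p says φ. -/
import Mathlib


mutual
inductive NTerm : Type
  | var : ℕ → NTerm
  | fn : ℕ → (k : ℕ) → (Fin k → NTerm) → NTerm
  | subprin : NTerm → NTerm → NTerm
  | group : ℕ → NFormula → NTerm

inductive NFormula : Type
  | tru : NFormula
  | fls : NFormula
  | rel : ℕ → (k : ℕ) → (Fin k → NTerm) → NFormula
  | eq : NTerm → NTerm → NFormula
  | and : NFormula → NFormula → NFormula
  | or : NFormula → NFormula → NFormula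
  | imp : NFormula → NFormula → NFormula
  | not : NFormula → NFormula
  | all : ℕ → NFormula → NFormula
  | ex : ℕ → NFormula → NFormula
  | says : NTerm → NFormula → NFormula
  | speaksfor : NTerm → NTerm → NFormula
  | speaksforRest : NTerm → NTerm → ℕ → NFormula → NFormula
end

mutual
def NTerm.subst : NTerm → ℕ → NTerm → NTerm
  | .var y, x, u => if y = x then u else .var y
  | .fn i k a, x, u => .fn i k (fun j => (a j).subst x u)
  | .subprin t1 t2, x, u => .subprin (t1.subst x u) (t2.subst x u)
  | .group y φ, x, u => if y = x then .group y φ else .group y (φ.subst x u)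

def NFormula.subst : NFormula → ℕ → NTerm → NFormula
  | .tru, _, _ => .tru
  | .fls, _, _ => .fls
  | .rel i k a, x, u => .rel i k (fun j => (a j).subst x u)
  | .eq t1 t2, x, u => .eq (t1.subst x u) (t2.subst x u)
  | .and φ ψ, x, u => .and (φ.subst x u) (ψ.subst x u)
  | .or φ ψ, x, u => .or (φ.subst x u) (ψ.subst x u)
  | .imp φ ψ, x, u => .imp (φ.subst x u) (ψ.subst x u)
  | .not φ, x, u => .not (φ.subst x u)
  | .all y φ, x, u => if y = x then .all y φ else .all y (φ.subst x u)
  | .ex y φ, x, u => if y = x then .ex y φ else .ex y (φ.subst x u)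
  | .says t φ, x, u => .says (t.subst x u) (φ.subst x u)
  | .speaksfor t1 t2, x, u => .speaksfor (t1.subst x u) (t2.subst x u)
  | .speaksforRest t1 t2 y φ, x, u =>
      if y = x then .speaksforRest (t1.subst x u) (t2.subst x u) y φ
      else .speaksforRest (t1.subst x u) (t2.subst x u) y (φ.subst x u)
end

mutual
def NTerm.fv : NTerm → Set ℕ
  | .var y => {y}
  | .fn _ _ a => {n | ∃ j, n ∈ (a j).fv}
  | .subprin t1 t2 => t1.fv ∪ t2.fv
  | .group y φ => φ.fv \ {y}

def NFormula.fv : NFormula → Set ℕ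
  | .tru => ∅
  | .fls => ∅
  | .rel _ _ a => {n | ∃ j, n ∈ (a j).fv}
  | .eq t1 t2 => t1.fv ∪ t2.fv
  | .and φ ψ => φ.fv ∪ ψ.fv
  | .or φ ψ => φ.fv ∪ ψ.fv
  | .imp φ ψ => φ.fv ∪ ψ.fv
  | .not φ => φ.fv
  | .all y φ => φ.fv \ {y}
  | .ex y φ => φ.fv \ {y}
  | .says t φ => t.fv ∪ φ.fv
  | .speaksfor t1 t2 => t1.fv ∪ t2.fv
  | .speaksforRest t1 t2 y φ => t1.fv ∪ t2.fv ∪ (φ.fv \ {y})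
end

/-- Free variables of a set of formulas. -/
def ctxFV (Γ : Set NFormula) : Set ℕ := {n | ∃ φ ∈ Γ, n ∈ φ.fv}

/-- `p says Γ` : the set of formulas `p says ψ` for `ψ ∈ Γ`. -/
def saysSet (p : NTerm) (Γ : Set NFormula) : Set NFormula :=
  (NFormula.says p) '' Γ

/-- The NAL₁ natural-deduction derivability judgment with localized hypotheses. -/
inductive NDerives : Set NFormula → NFormula → Prop
  | hyp {Γ φ} : NDerives (insert φ Γ) φ
  | weaken {Γ φ ψ} : NDerives Γ φ → NDerives (insert ψ Γ) φ
  | trueI {Γ} : NDerives Γ .tru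
  | falseE {Γ φ} : NDerives Γ .fls → NDerives Γ φ
  | andI {Γ φ ψ} : NDerives Γ φ → NDerives Γ ψ → NDerives Γ (.and φ ψ)
  | andE1 {Γ φ ψ} : NDerives Γ (.and φ ψ) → NDerives Γ φ
  | andE2 {Γ φ ψ} : NDerives Γ (.and φ ψ) → NDerives Γ ψ
  | orI1 {Γ φ ψ} : NDerives Γ φ → NDerives Γ (.or φ ψ)
  | orI2 {Γ φ ψ} : NDerives Γ ψ → NDerives Γ (.or φ ψ)
  | orE {Γ φ1 φ2 ψ} : NDerives Γ (.or φ1 φ2) → NDerives (insert φ1 Γ) ψ →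
      NDerives (insert φ2 Γ) ψ → NDerives Γ ψ
  | impI {Γ φ ψ} : NDerives (insert φ Γ) ψ → NDerives Γ (.imp φ ψ)
  | impE {Γ φ ψ} : NDerives Γ φ → NDerives Γ (.imp φ ψ) → NDerives Γ ψ
  | notI {Γ φ} : NDerives (insert φ Γ) .fls → NDerives Γ (.not φ)
  | notE {Γ φ ψ} : NDerives Γ φ → NDerives Γ (.not φ) → NDerives Γ ψ
  | allI {Γ x φ} : NDerives Γ φ → x ∉ ctxFV Γ → NDerives Γ (.all x φ)
  | allE {Γ x φ τ} : NDerives Γ (.all x φ) → NDerives Γ (φ.subst x τ)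
  | exI {Γ x φ τ} : NDerives Γ (φ.subst x τ) → NDerives Γ (.ex x φ)
  | exE {Γ x φ ψ} : NDerives Γ (.ex x φ) → NDerives (insert φ Γ) ψ →
      x ∉ ctxFV Γ → x ∉ ψ.fv → NDerives Γ ψ
  | saysI {Γ p φ} : NDerives Γ φ → NDerives (saysSet p Γ) (.says p φ)
  | saysM {Γ p φ} : NDerives (saysSet p Γ) φ → NDerives (saysSet p Γ) (.says p φ)
  | saysC {Γ p φ} : NDerives Γ (.says p φ) → NDerives (saysSet p Γ) (.says p φ)
  | eqRefl {Γ τ} : NDerives Γ (.eq τ τ)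
  | eqSym {Γ τ1 τ2} : NDerives Γ (.eq τ1 τ2) → NDerives Γ (.eq τ2 τ1)
  | eqTrans {Γ τ1 τ2 τ3} : NDerives Γ (.eq τ1 τ2) → NDerives Γ (.eq τ2 τ3) →
      NDerives Γ (.eq τ1 τ3)
  | fnCong {Γ i k} {a a' : Fin k → NTerm} :
      (∀ j, NDerives Γ (.eq (a j) (a' j))) →
      NDerives Γ (.eq (.fn i k a) (.fn i k a'))
  | relSubst {Γ i k} {a a' : Fin k → NTerm} :
      NDerives Γ (.rel i k a) → (∀ j, NDerives Γ (.eq (a j) (a' j))) →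
      NDerives Γ (.rel i k a')
  | handoff {Γ τ1 τ2} : NDerives Γ (.says τ2 (.speaksfor τ1 τ2)) →
      NDerives Γ (.speaksfor τ1 τ2)
  | handoffRest {Γ τ1 τ2 x φ} :
      NDerives Γ (.says τ2 (.speaksforRest τ1 τ2 x φ)) →
      NDerives Γ (.speaksforRest τ1 τ2 x φ)
  | sfE {Γ τ1 τ2 φ} : NDerives Γ (.speaksfor τ1 τ2) →
      NDerives Γ (.says τ1 φ) → NDerives Γ (.says τ2 φ)
  | sfRestE {Γ τ1 τ2 x φ τ} : NDerives Γ (.speaksforRest τ1 τ2 x φ) →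
      NDerives Γ (.says τ1 (φ.subst x τ)) → NDerives Γ (.says τ2 (φ.subst x τ))
  | sfRefl {Γ τ} : NDerives Γ (.speaksfor τ τ)
  | sfRestRefl {Γ τ x φ} : NDerives Γ (.speaksforRest τ τ x φ)
  | sfTrans {Γ τ1 τ2 τ3} : NDerives Γ (.speaksfor τ1 τ2) →
      NDerives Γ (.speaksfor τ2 τ3) → NDerives Γ (.speaksfor τ1 τ3)
  | sfRestTrans {Γ τ1 τ2 τ3 x φ} : NDerives Γ (.speaksforRest τ1 τ2 x φ) →
      NDerives Γ (.speaksforRest τ2 τ3 x φ) → NDerives Γ (.speaksforRest τ1 τ3 x φ)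
  | groupI {Γ x φ τ} : NDerives Γ (φ.subst x τ) →
      NDerives Γ (.speaksfor τ (.group x φ))
  | groupE {Γ x φ τ} : NDerives (insert φ Γ) (.speaksfor (.var x) τ) →
      x ∉ τ.fv → NDerives Γ (.speaksfor (.group x φ) τ)
  | subprinSF {Γ τ1 τ2} : NDerives Γ (.speaksfor τ1 (.subprin τ1 τ2))

/-- A NAL Kripke model. -/
structure NModel where
  W : Type
  le : W → W → Prop
  le_refl : ∀ w, le w w
  le_trans : ∀ {w1 w2 w3}, le w1 w2 → le w2 w3 → le w1 w3
  le_antisymm : ∀ {w1 w2}, le w1 w2 → le w2 w1 → w1 = w2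
  D : Type
  Dom : W → D → Prop
  Dom_mono : ∀ {w w'}, le w w' → ∀ {d}, Dom w d → Dom w' d
  deq : W → D → D → Prop
  deq_refl : ∀ w d, deq w d d
  deq_symm : ∀ {w d d'}, deq w d d' → deq w d' d
  deq_trans : ∀ {w d1 d2 d3}, deq w d1 d2 → deq w d2 d3 → deq w d1 d3
  deq_mono : ∀ {w w'}, le w w' → ∀ {d d'}, deq w d d' → deq w' d d'
  rel : ℕ → (k : ℕ) → W → (Fin k → D) → Prop
  rel_mono : ∀ {i k w w'}, le w w' → ∀ {a : Fin k → D}, rel i k w a → rel i k w' a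
  rel_congr : ∀ {i k w} {a a' : Fin k → D},
      (∀ j, deq w (a j) (a' j)) → rel i k w a → rel i k w a'
  fn : ℕ → (k : ℕ) → (Fin k → D) → D
  fn_congr : ∀ {i k w} {a a' : Fin k → D},
      (∀ j, deq w (a j) (a' j)) → deq w (fn i k a) (fn i k a')
  A : D → W → W → Prop
  F1 : ∀ {p w w' v}, le w w' → A p w v → ∃ v', le v v' ∧ A p w' v'
  F2 : ∀ {p w v v'}, A p w v → le v v' → ∃ w', le w w' ∧ A p w' v'
  sub : D → D → D
  sub_speaks : ∀ {p d w w'}, A (sub p d) w w' → A p w w'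
  join : D → D → D
  join_comm : ∀ p q, join p q = join q p
  join_speaks : ∀ {p q w w'}, A (join p q) w w' → A p w w'
  bot : D
  gjoin : (D → Prop) → D

mutual
/-- Interpretation of terms. -/
def interp (M : NModel) (w : M.W) (v : ℕ → M.D) : NTerm → M.D
  | .var x => v x
  | .fn i k a => M.fn i k (fun j => interp M w v (a j))
  | .subprin t1 t2 => M.sub (interp M w v t1) (interp M w v t2)
  | .group x φ => M.gjoin (fun p => sat M w (Function.update v x p) φ)

/-- The validity judgment `M, w, v ⊨ φ`. -/
def sat (M : NModel) (w : M.W) (v : ℕ → M.D) : NFormula → Prop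
  | .tru => True
  | .fls => False
  | .rel i k a => M.rel i k w (fun j => interp M w v (a j))
  | .eq t1 t2 => M.deq w (interp M w v t1) (interp M w v t2)
  | .and φ ψ => sat M w v φ ∧ sat M w v ψ
  | .or φ ψ => sat M w v φ ∨ sat M w v ψ
  | .imp φ ψ => ∀ w', M.le w w' → sat M w' v φ → sat M w' v ψ
  | .not φ => ∀ w', M.le w w' → ¬ sat M w' v φ
  | .all x φ => ∀ w', M.le w w' → ∀ d, M.Dom w' d → sat M w' (Function.update v x d) φ
  | .ex x φ => ∃ d, M.Dom w d ∧ sat M w (Function.update v x d) φ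
  | .says t φ => ∀ w' w'', M.le w w' → M.A (interp M w v t) w' w'' → sat M w'' v φ
  | .speaksfor t1 t2 => ∀ w' w'',
      M.A (interp M w v t2) w' w'' → M.A (interp M w v t1) w' w''
  | .speaksforRest t1 t2 x φ => ∀ w' w'', M.A (interp M w v t2) w' w'' →
      ∃ w''', (∀ d, M.Dom w' d →
          ((∀ v', sat M w'' (Function.update v' x d) φ) ↔
           (∀ v', sat M w''' (Function.update v' x d) φ))) ∧
        M.A (interp M w v t1) w' w'''
end

/-- The equivalence relation `w'' ≡_{x:φ}^{w'} w'''` on worlds. -/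
def equivW (M : NModel) (x : ℕ) (φ : NFormula) (w : M.W) (w1 w2 : M.W) : Prop :=
  ∀ d, M.Dom w d →
    ((∀ v, sat M w1 (Function.update v x d) φ) ↔
     (∀ v, sat M w2 (Function.update v x d) φ))

/-- Soundness of the says introduction rule. -/
theorem saysI_sound (Γ : Set NFormula) (p : NTerm) (φ : NFormula)
    (h : ∀ (M : NModel) (w : M.W) (v : ℕ → M.D),
      (∀ ψ ∈ Γ, sat M w v ψ) → sat M w v φ) :
    ∀ (M : NModel) (w : M.W) (v : ℕ → M.D),
      (∀ ψ ∈ saysSet p Γ, sat M w v ψ) → sat M w v (.says p φ) := by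
  intro M w v hΓ
  simp only [sat]
  intro w' w'' hle hA
  apply h M w''
  intro ψ hψ
  have := hΓ (.says p ψ) ⟨ψ, hψ, rfl⟩
  simp only [sat] at this
  exact this w' w'' hle hA
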